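/- Let W be a non-negative random variable with P(W > 0) > 0, let β > 0, and set g(x) = E[exp(-W e^{βx})] for x ∈ ℝ. Then the following are equivalent: (i) for all y ∈ ℝ, lim_{x → -∞} (1 - g(x+y)) / (1 - g(x)) = e^{βy}; (ii) the function λ ↦ -log E[exp(-λ W)] is regularly varying at 0 with index 1, i.e. for every y > 0, lim_{t → 0+} (-log E[exp(-t y W)]) / (-log E[exp(-t W)]) = y. -/

import Mathlib

/-!
With `G t = E[exp(-t W)]`, the substitution `t = e^{βx}`, `z = e^{βy}` turns (i) into
`(1 - G(tz)) / (1 - G t) → z` as `t → 0+`. Since `G t → 1` there and `-log u ~ 1 - u` as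
`u → 1`, the two ratios in (i) and (ii) are asymptotically equivalent, so one converges to `z`
iff the other does.
-/

open MeasureTheory ProbabilityTheory Filter Set
open scoped ENNReal NNReal Topology

noncomputable section

/-- `𝔓`: point measures on `ℝ` assigning a finite integer mass to every interval `(x, ∞)`. -/
def IsPP (D : Measure ℝ) : Prop := ∀ x : ℝ, ∃ n : ℕ, D (Set.Ioi x) = n

/-- ranked sequence of atoms: `nthAtom D n` is the position `d_{n+1}` of the `(n+1)`-st largest
atom of `D` (counted with multiplicity), equal to `⊥ = -∞` if `D` has at most `n` atoms. -/
def nthAtom (D : Measure ℝ) (n : ℕ) : EReal :=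
  sInf (Real.toEReal '' {x : ℝ | D (Set.Ioi x) < (n : ℝ≥0∞) + 1})

/-- `max D`: position of the largest atom of `D`, `-∞` for the null measure. -/
def maxAtom (D : Measure ℝ) : EReal := nthAtom D 0

/-- translation `τ_y D` of the point measure `D` by a real number `y`. -/
def ppTranslate (y : ℝ) (D : Measure ℝ) : Measure ℝ := Measure.map (fun x => x + y) D

/-- translation of `D` by an extended real shift, with the convention that a `±∞` shift gives
the null point measure. -/
def translateE (y : EReal) (D : Measure ℝ) : Measure ℝ :=
  if y = ⊥ ∨ y = ⊤ then 0 else ppTranslate y.toReal D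

/-- `e^{α y}` for an extended real `y`, with `e^{α ⬝ (-∞)} = 0` (and junk value `0` at `+∞`). -/
def eweight (α : ℝ) (y : EReal) : ℝ :=
  if y = ⊥ ∨ y = ⊤ then 0 else Real.exp (α * y.toReal)

/-- `⟨D, φ⟩ = ∫ φ dD` for a non-negative test function. -/
def lap (D : Measure ℝ) (φ : ℝ → ℝ) : ℝ≥0∞ := ∫⁻ x, ENNReal.ofReal (φ x) ∂D

/-- `e^{-t}` for `t : ℝ≥0∞`, with `e^{-∞} = 0`. -/
def expNeg (t : ℝ≥0∞) : ℝ := if t = ⊤ then 0 else Real.exp (-t.toReal)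

/-- `ℝ≥0∞`-valued version of `expNeg`. -/
def nexp (t : ℝ≥0∞) : ℝ≥0∞ := ENNReal.ofReal (expNeg t)

/-- The point measure `Σ_j τ_{z_j} E_j`, where `(z_j)` are the ranked atoms of `Z`;
atoms at `-∞` (i.e. beyond the total mass of `Z`) contribute the null measure. -/
def branchSum (Z : Measure ℝ) (Es : ℕ → Measure ℝ) : Measure ℝ :=
  Measure.sum fun j => translateE (nthAtom Z j) (Es j)

/-- `IsBranchLaw 𝒟 ℰ ν` : `ν` is the law of `Σ_j τ_{d_j} E^{(j)}` where `(d_j)` is the ranked atom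
sequence of a point measure of law `𝒟` and `(E^{(j)})` are i.i.d. point measures of law `ℰ`
independent of it; i.e. `ν = 𝒟 ⊛ ℰ`. -/
def IsBranchLaw (μD μE ν : Measure (Measure ℝ)) : Prop :=
  ∃ (Ω : Type) (_ : MeasurableSpace Ω) (P : Measure Ω) (D : Ω → Measure ℝ)
      (Es : ℕ → Ω → Measure ℝ),
    IsProbabilityMeasure P ∧ Measurable D ∧ (∀ j, Measurable (Es j)) ∧
    P.map D = μD ∧ (∀ j, P.map (Es j) = μE) ∧
    iIndepFun Es P ∧
    IndepFun D (fun ω j => Es j ω) P ∧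
    P.map (fun ω => branchSum (D ω) fun j => Es j ω) = ν

/-- the law `μ` on point measures is carried by `𝔓`. -/
def OnPP (μ : Measure (Measure ℝ)) : Prop := μ {D | IsPP D} = 1

/-- the law `μ` on point measures is carried by `𝔓* = {D ∈ 𝔓 : max D = 0}`. -/
def OnPPstar (μ : Measure (Measure ℝ)) : Prop := μ {D | IsPP D ∧ maxAtom D = 0} = 1

/-- `E` (of law `μE`) satisfies the fixed point equation `(⋆)`:
`E =_d Σ_j τ_{z_j} E^{(j)}` with `(E^{(j)})` i.i.d. copies of `E` independent of `Z ~ μZ`,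
i.e. `ℰ = 𝒵 ⊛ ℰ`. -/
def SatisfiesStar (μZ μE : Measure (Measure ℝ)) : Prop := IsBranchLaw μZ μE μE

/-- Assumption (A1). -/
def AssumptionA1 (μZ : Measure (Measure ℝ)) (α : ℝ) : Prop :=
  1 < ∫⁻ D, D Set.univ ∂μZ ∧
    ∫⁻ D, ∫⁻ x, ENNReal.ofReal (Real.exp (α * x)) ∂D ∂μZ = 1

/-- `X = ⟨Z, e^{αx}⟩ = Σ_j e^{α z_j}`. -/
def addMassE (α : ℝ) (D : Measure ℝ) : ℝ≥0∞ := ∫⁻ x, ENNReal.ofReal (Real.exp (α * x)) ∂D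

/-- `X̃ = Σ_j (z_j)_+ e^{α z_j}`. -/
def posMassE (α : ℝ) (D : Measure ℝ) : ℝ≥0∞ :=
  ∫⁻ x, ENNReal.ofReal (max x 0 * Real.exp (α * x)) ∂D

/-- `log₊`. -/
def logPlus (x : ℝ) : ℝ := Real.log (max x 1)

/-- Assumption (A2a), the regular case. -/
def AssumptionA2a (μZ : Measure (Measure ℝ)) (α : ℝ) : Prop :=
  (∀ᵐ D ∂μZ, Integrable (fun x => x * Real.exp (α * x)) D) ∧
  Integrable (fun D => ∫ x, x * Real.exp (α * x) ∂D) μZ ∧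
  (∫ D, ∫ x, x * Real.exp (α * x) ∂D ∂μZ) < 0 ∧
  ∫⁻ D, addMassE α D * ENNReal.ofReal (logPlus (addMassE α D).toReal) ∂μZ < ⊤

/-- Assumption (A2b), the boundary case. -/
def AssumptionA2b (μZ : Measure (Measure ℝ)) (α : ℝ) : Prop :=
  (∀ᵐ D ∂μZ, Integrable (fun x => x * Real.exp (α * x)) D) ∧
  Integrable (fun D => ∫ x, x * Real.exp (α * x) ∂D) μZ ∧
  (∫ D, ∫ x, x * Real.exp (α * x) ∂D ∂μZ) = 0 ∧
  (∫⁻ D, ∫⁻ x, ENNReal.ofReal (x ^ 2 * Real.exp (α * x)) ∂D ∂μZ < ⊤) ∧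
  (∫⁻ D, addMassE α D * ENNReal.ofReal (logPlus (addMassE α D).toReal ^ 2) ∂μZ)
      + (∫⁻ D, posMassE α D * ENNReal.ofReal (logPlus (posMassE α D).toReal) ∂μZ) < ⊤

/-- Assumption (A2). -/
def AssumptionA2 (μZ : Measure (Measure ℝ)) (α : ℝ) : Prop :=
  AssumptionA2a μZ α ∨ AssumptionA2b μZ α

/-- Assumption (A3), the non-lattice assumption. -/
def AssumptionA3 (μZ : Measure (Measure ℝ)) : Prop :=
  ∀ a : ℝ, 0 < a → ∀ b : ℝ,
    μZ {D | D {x : ℝ | ¬ ∃ k : ℤ, x = a * k + b} = 0} < 1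

/-- The additive martingale variable `⟨Z_n, e^{αx}⟩`. -/
def addMart (α : ℝ) (D : Measure ℝ) : ℝ := (addMassE α D).toReal

/-- The derivative martingale variable `⟨Z_n, x e^{αx}⟩`. -/
def derMart (α : ℝ) (D : Measure ℝ) : ℝ := ∫ x, x * Real.exp (α * x) ∂D

/-- `(Zn)` is a branching random walk with reproduction law `μZ` on the probability
space `(Ω, P)` : `Z_0 = δ_0` and `Z_{n+1} = Σ_k τ_{z_k^{(n)}} Z^{(k)}` where, given `Z_0, …, Z_n`
with `Z_n` of ranked atoms `(z_k^{(n)})`, the `(Z^{(k)})` are i.i.d. of law `μZ` independent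
of `(Z_0, …, Z_n)`. -/
def IsBRW {Ω : Type*} [MeasurableSpace Ω] (P : Measure Ω) (μZ : Measure (Measure ℝ))
    (Zn : ℕ → Ω → Measure ℝ) : Prop :=
  (∀ n, Measurable (Zn n)) ∧ (∀ᵐ ω ∂P, Zn 0 ω = Measure.dirac (0 : ℝ)) ∧
  ∀ n : ℕ, ∃ Es : ℕ → Ω → Measure ℝ,
    (∀ j, Measurable (Es j)) ∧ (∀ j, P.map (Es j) = μZ) ∧
    iIndepFun Es P ∧
    IndepFun (fun ω => fun k : Fin (n + 1) => Zn k ω) (fun ω => fun j : ℕ => Es j ω) P ∧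
    ∀ᵐ ω ∂P, Zn (n + 1) ω = branchSum (Zn n ω) fun j => Es j ω

/-- `S` is the a.s. limit of the additive martingale of a branching random walk of reproduction
law `μZ` in the regular case (A2a), and of its derivative martingale in the boundary case (A2b). -/
def IsMartLimit {Ω : Type*} [MeasurableSpace Ω] (P : Measure Ω) (α : ℝ)
    (μZ : Measure (Measure ℝ)) (S : Ω → ℝ) : Prop :=
  ∃ Zn : ℕ → Ω → Measure ℝ, IsBRW P μZ Zn ∧
    ((AssumptionA2a μZ α ∧
        ∀ᵐ ω ∂P, Tendsto (fun n => addMart α (Zn n ω)) atTop (𝓝 (S ω))) ∨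
     (AssumptionA2b μZ α ∧
        ∀ᵐ ω ∂P, Tendsto (fun n => derMart α (Zn n ω)) atTop (𝓝 (S ω))))

/-- The measure `c e^{-α x} dx` on `ℝ`. -/
def expIntensity (α c : ℝ) : Measure ℝ :=
  volume.withDensity fun x => ENNReal.ofReal (c * Real.exp (-(α * x)))

/-- `Λ` is the law of a Poisson point process with intensity `ν`, characterized by its
Laplace functional `E[e^{-⟨N, f⟩}] = exp(-∫ (1 - e^{-f}) dν)`. -/
def IsPPP (Λ : Measure (Measure ℝ)) (ν : Measure ℝ) : Prop :=
  IsProbabilityMeasure Λ ∧ ∀ f : ℝ → ℝ≥0∞, Measurable f →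
    ∫⁻ D, nexp (∫⁻ x, f x ∂D) ∂Λ = nexp (∫⁻ x, 1 - nexp (f x) ∂ν)

/-- law of the single-atom point measure `δ_{α⁻¹ log S}` when `S ~ μS`
(null measure when `S = 0`). -/
def shiftLaw (α : ℝ) (μS : Measure ℝ) : Measure (Measure ℝ) :=
  μS.map fun s => if s = 0 then (0 : Measure ℝ) else Measure.dirac (α⁻¹ * Real.log s)

/-- `μE` is the law of an SDPPP(`S`, `e^{-αx} dx`, `𝒟`) with `S ~ μS`, `𝒟 = μD`:
`μE = 𝒮 ⊛ 𝒳 ⊛ 𝒟` where `𝒮 = shiftLaw α μS` and `𝒳` is the law of a Poisson point process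
of intensity `e^{-αx} dx`. -/
def IsSDPPP (α : ℝ) (μS : Measure ℝ) (μD μE : Measure (Measure ℝ)) : Prop :=
  ∃ Λ ν : Measure (Measure ℝ), IsPPP Λ (expIntensity α 1) ∧
    IsBranchLaw (shiftLaw α μS) Λ ν ∧ IsBranchLaw ν μD μE

/-- The set `𝔗` of test functions: continuous, non-negative, bounded, with support bounded
on the left. -/
def TestFun (φ : ℝ → ℝ) : Prop :=
  Continuous φ ∧ (∀ x, 0 ≤ φ x) ∧ (∃ M, ∀ x, φ x ≤ M) ∧ ∃ K, ∀ x < K, φ x = 0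

/-- Laplace functional `F_φ(x) = E[exp(-⟨τ_x E, φ⟩)]` of a law `μE` of point measures. -/
def lapFun (μE : Measure (Measure ℝ)) (φ : ℝ → ℝ) (x : ℝ) : ℝ :=
  ∫ D, expNeg (lap (ppTranslate x D) φ) ∂μE

/-- `e^{α max D}`, with the convention `e^{α⬝(-∞)} = 0`. -/
def emax (α : ℝ) (D : Measure ℝ) : ℝ≥0∞ :=
  if maxAtom D = ⊥ ∨ maxAtom D = ⊤ then 0
  else ENNReal.ofReal (Real.exp (α * (maxAtom D).toReal))

/-- `E[exp(-⟨τ_x D, φ⟩)]` where `D ~ μD`. -/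
def decLap (μD : Measure (Measure ℝ)) (φ : ℝ → ℝ) (x : ℝ) : ℝ :=
  ∫ D, expNeg (lap (ppTranslate x D) φ) ∂μD

/-- `Ψ_φ(x) = -log E[exp(-⟨τ_x D, φ⟩)]`. -/
def PsiFun (μD : Measure (Measure ℝ)) (φ : ℝ → ℝ) (x : ℝ) : ℝ :=
  -Real.log (decLap μD φ x)

open Asymptotics

lemma Real.isEquivalent_log_nhds_one : Real.log ~[𝓝 1] fun x => x - 1 := by
  show (Real.log - fun x => x - 1) =o[𝓝 1] _
  simpa [Pi.sub_def] using (Real.hasDerivAt_log one_ne_zero).isLittleO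

lemma isEquivalent_neg_log_one_sub {α : Type*} {l : Filter α} {G : α → ℝ}
    (hG : Tendsto G l (𝓝 1)) : (fun a => -Real.log (G a)) ~[l] fun a => 1 - G a := by
  simpa using (Real.isEquivalent_log_nhds_one.comp_tendsto hG).neg

lemma tendsto_one_sub_div_iff_tendsto_neg_log_div {α : Type*} {l : Filter α} {G : α → ℝ}
    (hG : Tendsto G l (𝓝 1)) {φ : α → α} (hφ : Tendsto φ l l) {c : ℝ} :
    Tendsto (fun a => (1 - G (φ a)) / (1 - G a)) l (𝓝 c) ↔
      Tendsto (fun a => -Real.log (G (φ a)) / -Real.log (G a)) l (𝓝 c) :=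
  ((isEquivalent_neg_log_one_sub hG).comp_tendsto hφ |>.div
    (isEquivalent_neg_log_one_sub hG)).tendsto_nhds_iff.symm

lemma tendsto_comp_exp_const_mul_atBot_iff {α : Type*} {l : Filter α} {f : ℝ → α} {β : ℝ}
    (hβ : 0 < β) :
    Tendsto (fun x => f (Real.exp (β * x))) atBot l ↔ Tendsto f (𝓝[>] 0) l := by
  have : map (fun x => Real.exp (β * x)) atBot = 𝓝[>] 0 := by
    have := congrArg (map Real.exp) (OrderIso.mulLeft₀ β hβ).map_atBot
    rwa [Filter.map_map, Real.map_exp_atBot] at this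
  rw [← this, tendsto_map'_iff]
  rfl

lemma tendsto_integral_exp_neg_mul_nhdsGT_zero {Ω : Type*} [MeasurableSpace Ω] {P : Measure Ω}
    [IsProbabilityMeasure P] {W : Ω → ℝ} (hW : AEMeasurable W P) (hWnn : ∀ᵐ ω ∂P, 0 ≤ W ω) :
    Tendsto (fun t => ∫ ω, Real.exp (-(t * W ω)) ∂P) (𝓝[>] 0) (𝓝 1) := by
  have hbound : ∀ᶠ t in 𝓝[>] (0 : ℝ), ∀ᵐ ω ∂P, ‖Real.exp (-(t * W ω))‖ ≤ 1 := by
    filter_upwards [self_mem_nhdsWithin] with t ht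
    filter_upwards [hWnn] with ω hω
    rw [Real.norm_of_nonneg (Real.exp_pos _).le, Real.exp_le_one_iff, neg_nonpos]
    exact mul_nonneg (le_of_lt ht) hω
  have hlim : ∀ ω, Tendsto (fun t => Real.exp (-(t * W ω))) (𝓝[>] 0) (𝓝 1) := fun ω => by
    have : Continuous fun t => Real.exp (-(t * W ω)) := by fun_prop
    simpa using (this.tendsto 0).mono_left nhdsWithin_le_nhds
  simpa using tendsto_integral_filter_of_dominated_convergence (fun _ => 1)
    (Eventually.of_forall fun t => (by fun_prop : AEMeasurable _ P).aestronglyMeasurable)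
    hbound (integrable_const 1) (Eventually.of_forall hlim)

theorem slow_variation_iff_general
    {Ω : Type*} [MeasurableSpace Ω] (P : Measure Ω) [IsProbabilityMeasure P]
    (W : Ω → ℝ) (hW : Measurable W) (hWnn : ∀ᵐ ω ∂P, 0 ≤ W ω)
    (β : ℝ) (hβ : 0 < β) :
    (∀ y : ℝ, Tendsto
        (fun x : ℝ => (1 - ∫ ω, Real.exp (-(W ω * Real.exp (β * (x + y)))) ∂P) /
          (1 - ∫ ω, Real.exp (-(W ω * Real.exp (β * x))) ∂P))
        atBot (𝓝 (Real.exp (β * y)))) ↔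
    (∀ y : ℝ, 0 < y → Tendsto
        (fun t : ℝ => (-Real.log (∫ ω, Real.exp (-(t * y * W ω)) ∂P)) /
          (-Real.log (∫ ω, Real.exp (-(t * W ω)) ∂P)))
        (𝓝[>] (0 : ℝ)) (𝓝 y)) := by
  set G : ℝ → ℝ := fun t => ∫ ω, Real.exp (-(t * W ω)) ∂P
  have hG : Tendsto G (𝓝[>] 0) (𝓝 1) :=
    tendsto_integral_exp_neg_mul_nhdsGT_zero hW.aemeasurable hWnn
  have hratio {z : ℝ} (hz : 0 < z) :
      Tendsto (fun t => (1 - G (t * z)) / (1 - G t)) (𝓝[>] 0) (𝓝 z) ↔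
        Tendsto (fun t => -Real.log (G (t * z)) / -Real.log (G t)) (𝓝[>] 0) (𝓝 z) := by
    refine tendsto_one_sub_div_iff_tendsto_neg_log_div hG ?_
    exact ((continuous_mul_const z).tendsto' 0 0 (zero_mul z)).inf
      (tendsto_principal_principal.2 fun t ht => mul_pos ht hz)
  have hsubst (y : ℝ) :
      Tendsto (fun x => (1 - ∫ ω, Real.exp (-(W ω * Real.exp (β * (x + y)))) ∂P) /
          (1 - ∫ ω, Real.exp (-(W ω * Real.exp (β * x))) ∂P)) atBot (𝓝 (Real.exp (β * y))) ↔
        Tendsto (fun t => (1 - G (t * Real.exp (β * y))) / (1 - G t)) (𝓝[>] 0)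
          (𝓝 (Real.exp (β * y))) := by
    rw [← tendsto_comp_exp_const_mul_atBot_iff hβ]
    simp only [G, mul_add, Real.exp_add, mul_comm (W _)]
  constructor
  · intro h y hy
    obtain ⟨x, rfl⟩ : ∃ x, Real.exp (β * x) = y :=
      ⟨Real.log y / β, by rw [mul_div_cancel₀ _ hβ.ne', Real.exp_log hy]⟩
    exact (hratio (Real.exp_pos _)).1 ((hsubst x).1 (h x))
  · intro h y
    exact (hsubst y).2 ((hratio (Real.exp_pos _)).2 (h _ (Real.exp_pos _)))

/-- for `g(x) = E[exp(-W e^{βx})]`, the regular-variation condition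
`(1 - g(x+y))/(1 - g(x)) → e^{βy}` as `x → -∞` (for all `y`) is equivalent to
`λ ↦ -log E[e^{-λW}]` being regularly varying at `0` with index `1`. -/
theorem slow_variation_iff
    {Ω : Type*} [MeasurableSpace Ω] (P : Measure Ω) [IsProbabilityMeasure P]
    (W : Ω → ℝ) (hW : Measurable W) (hWnn : ∀ᵐ ω ∂P, 0 ≤ W ω)
    (hWpos : 0 < P {ω | 0 < W ω})
    (β : ℝ) (hβ : 0 < β) :
    (∀ y : ℝ, Tendsto
        (fun x : ℝ => (1 - ∫ ω, Real.exp (-(W ω * Real.exp (β * (x + y)))) ∂P) /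
          (1 - ∫ ω, Real.exp (-(W ω * Real.exp (β * x))) ∂P))
        atBot (𝓝 (Real.exp (β * y)))) ↔
    (∀ y : ℝ, 0 < y → Tendsto
        (fun t : ℝ => (-Real.log (∫ ω, Real.exp (-(t * y * W ω)) ∂P)) /
          (-Real.log (∫ ω, Real.exp (-(t * W ω)) ∂P)))
        (𝓝[>] (0 : ℝ)) (𝓝 y)) :=
  slow_variation_iff_general P W hW hWnn β hβ

end
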